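/- arXiv:2304.01121 — 2 statements merged into one kernel-verified Lean document; each statement's English description precedes it below -/
import Mathlib

section
/- Let (X, d, μ) be a metric measure space satisfying a lower mass bound μ(B(x, r)) ≥ c_L r^Q for all x ∈ X and 0 < r < 2 diam(X), where Q > 0 and 0 < c_L ≤ 1. Let 1 ≤ p < ∞, 0 < α ≤ Q/p (with α < Q if p = 1), and f ∈ L^p(X) with ‖f‖_{L^p} > 0. Then for every x ∈ X with Mf(x) < ∞, one has M^α f(x) ≤ C ‖f‖_{L^p(X)}^{α p / Q} (Mf(x))^{1 - α p / Q}, where C depends only on c_L, α, Q, p, and M denotes the uncentered Hardy–Littlewood maximal function. -/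
open MeasureTheory Metric Set

def fracMaxSet {X : Type*} [MetricSpace X] [MeasurableSpace X]
    (μ : Measure X) (α : ℝ) (f : X → ℝ) (x : X) : Set ℝ :=
  {v | ∃ (c : X) (r : ℝ), 0 < r ∧
    ENNReal.ofReal r < 2 * EMetric.diam (Set.univ : Set X) ∧
    x ∈ ball c r ∧ v = r ^ α * ⨍ y in ball c r, |f y| ∂μ}

noncomputable def fracMax {X : Type*} [MetricSpace X] [MeasurableSpace X]
    (μ : Measure X) (α : ℝ) (f : X → ℝ) (x : X) : ℝ :=
  sSup (fracMaxSet μ α f x)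

/-!
On a ball `B` of radius `r`, Hölder's inequality and the lower mass bound give
`⨍_B |f| ≤ ‖f‖_p μ(B)^(-1/p) ≤ c_L^(-1/p) ‖f‖_p r^(-Q/p)`, while trivially `⨍_B |f| ≤ Mf(x)`.
Writing `θ = αp/Q ∈ (0, 1]`, interpolate:
`r^α ⨍_B |f| = (r^(Q/p) ⨍_B |f|)^θ (⨍_B |f|)^(1-θ) ≤ (c_L^(-1/p) ‖f‖_p)^θ Mf(x)^(1-θ)`.
-/

section LpAverage

variable {X : Type*} [MeasurableSpace X] {μ : Measure X} {p : ℝ} {f : X → ℝ} {s : Set X}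

theorem setAverage_abs_nonneg : 0 ≤ ⨍ y in s, |f y| ∂μ := by
  rw [setAverage_eq, smul_eq_mul]
  exact mul_nonneg (inv_nonneg.2 measureReal_nonneg) (integral_nonneg fun y => abs_nonneg _)

theorem setIntegral_abs_le_eLpNorm_mul_measureReal_rpow (hp : 1 ≤ p)
    (hf : MemLp f (ENNReal.ofReal p) μ) (hs : μ s ≠ ⊤) :
    ∫ y in s, |f y| ∂μ ≤
      (eLpNorm f (ENNReal.ofReal p) μ).toReal * μ.real s ^ (1 - 1 / p) := by
  have hp0 : 0 < p := one_pos.trans_le hp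
  have hexp : 0 ≤ 1 - 1 / p := sub_nonneg.2 ((div_le_one hp0).2 hp)
  have hint : ∫ y in s, |f y| ∂μ = (eLpNorm f 1 (μ.restrict s)).toReal := by
    rw [eLpNorm_one_eq_lintegral_enorm, ← integral_norm_eq_lintegral_enorm hf.1.restrict]
    simp only [Real.norm_eq_abs]
  have holder : eLpNorm f 1 (μ.restrict s) ≤
      eLpNorm f (ENNReal.ofReal p) μ * μ s ^ (1 - 1 / p) := by
    have h := eLpNorm_le_eLpNorm_mul_rpow_measure_univ (ENNReal.one_le_ofReal.2 hp)
      (hf.1.restrict (s := s))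
    rw [Measure.restrict_apply_univ, ENNReal.toReal_one, ENNReal.toReal_ofReal hp0.le,
      div_one] at h
    exact h.trans (mul_le_mul_left (eLpNorm_mono_measure f Measure.restrict_le_self) _)
  rw [hint, measureReal_def, ENNReal.toReal_rpow, ← ENNReal.toReal_mul]
  exact ENNReal.toReal_mono
    (ENNReal.mul_ne_top hf.2.ne (ENNReal.rpow_ne_top_of_nonneg hexp hs)) holder

theorem setAverage_abs_le_eLpNorm_mul_measureReal_rpow (hp : 1 ≤ p)
    (hf : MemLp f (ENNReal.ofReal p) μ) (hs0 : μ s ≠ 0) (hs : μ s ≠ ⊤) :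
    ⨍ y in s, |f y| ∂μ ≤
      (eLpNorm f (ENNReal.ofReal p) μ).toReal * μ.real s ^ (-(1 / p)) := by
  have hm : 0 < μ.real s := ENNReal.toReal_pos hs0 hs
  rw [setAverage_eq, smul_eq_mul]
  calc (μ.real s)⁻¹ * ∫ y in s, |f y| ∂μ
      ≤ (μ.real s)⁻¹ * ((eLpNorm f (ENNReal.ofReal p) μ).toReal * μ.real s ^ (1 - 1 / p)) :=
        mul_le_mul_of_nonneg_left (setIntegral_abs_le_eLpNorm_mul_measureReal_rpow hp hf hs)
          (inv_nonneg.2 hm.le)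
    _ = (eLpNorm f (ENNReal.ofReal p) μ).toReal * μ.real s ^ (-(1 / p)) := by
        rw [← Real.rpow_neg_one, mul_left_comm, ← Real.rpow_add hm]
        ring_nf

theorem rpow_mul_setAverage_abs_le_of_ofReal_le_measure {c_L Q r : ℝ} (hcL : 0 < c_L)
    (hr : 0 < r) (hp : 1 ≤ p) (hf : MemLp f (ENNReal.ofReal p) μ) (hs : μ s ≠ ⊤)
    (hmass : ENNReal.ofReal (c_L * r ^ Q) ≤ μ s) :
    r ^ (Q / p) * ⨍ y in s, |f y| ∂μ ≤
      c_L ^ (-(1 / p)) * (eLpNorm f (ENNReal.ofReal p) μ).toReal := by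
  set N := (eLpNorm f (ENNReal.ofReal p) μ).toReal
  have hp0 : 0 < p := one_pos.trans_le hp
  have hmass_pos : 0 < c_L * r ^ Q := by positivity
  have hs0 : μ s ≠ 0 := (ENNReal.ofReal_pos.2 hmass_pos).trans_le hmass |>.ne'
  have hmass' : c_L * r ^ Q ≤ μ.real s := (ENNReal.ofReal_le_iff_le_toReal hs).1 hmass
  calc r ^ (Q / p) * ⨍ y in s, |f y| ∂μ
      ≤ r ^ (Q / p) * (N * μ.real s ^ (-(1 / p))) := by
        gcongr
        exact setAverage_abs_le_eLpNorm_mul_measureReal_rpow hp hf hs0 hs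
    _ ≤ r ^ (Q / p) * (N * (c_L * r ^ Q) ^ (-(1 / p))) := by
        gcongr r ^ (Q / p) * (N * ?_)
        exact Real.rpow_le_rpow_of_nonpos hmass_pos hmass' (by rw [neg_nonpos]; positivity)
    _ = c_L ^ (-(1 / p)) * N := by
        rw [Real.mul_rpow hcL.le (by positivity), ← Real.rpow_mul hr.le,
          mul_left_comm, mul_left_comm (r ^ (Q / p)), ← Real.rpow_add hr]
        ring_nf
        simp

end LpAverage

theorem Real.rpow_mul_le_rpow_mul_rpow_of_le {t a K M β θ : ℝ} (ht : 0 ≤ t) (ha : 0 ≤ a)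
    (hθ0 : 0 ≤ θ) (hθ1 : θ ≤ 1) (hK : t ^ β * a ≤ K) (hM : a ≤ M) :
    t ^ (θ * β) * a ≤ K ^ θ * M ^ (1 - θ) := by
  have hK0 : 0 ≤ K := (mul_nonneg (Real.rpow_nonneg ht _) ha).trans hK
  rcases ha.eq_or_lt with rfl | ha
  · rw [mul_zero]
    exact mul_nonneg (Real.rpow_nonneg hK0 _) (Real.rpow_nonneg hM _)
  calc t ^ (θ * β) * a = (t ^ β * a) ^ θ * a ^ (1 - θ) := by
        rw [Real.mul_rpow (by positivity) ha.le, ← Real.rpow_mul ht, mul_assoc,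
          ← Real.rpow_add ha, mul_comm β]
        simp
    _ ≤ K ^ θ * M ^ (1 - θ) := by
        gcongr

section FracMax

variable {X : Type*} [MetricSpace X] [MeasurableSpace X] {μ : Measure X} {f : X → ℝ} {x : X}

theorem fracMax_nonneg (α : ℝ) : 0 ≤ fracMax μ α f x := by
  apply Real.sSup_nonneg
  rintro v ⟨c, r, hr, -, -, rfl⟩
  exact mul_nonneg (Real.rpow_nonneg hr.le _) setAverage_abs_nonneg

theorem setAverage_abs_le_fracMax_zero (hbdd : BddAbove (fracMaxSet μ 0 f x)) {c : X} {r : ℝ}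
    (hr : 0 < r) (hdiam : ENNReal.ofReal r < 2 * ediam (univ : Set X))
    (hx : x ∈ ball c r) :
    ⨍ y in ball c r, |f y| ∂μ ≤ fracMax μ 0 f x :=
  le_csSup hbdd ⟨c, r, hr, hdiam, hx, by rw [Real.rpow_zero, one_mul]⟩

end FracMax

theorem stmt_4_general {X : Type*} [MetricSpace X] [MeasurableSpace X]
    (μ : Measure X) (hball : ∀ (c : X) (r : ℝ), 0 < r → 0 < μ (ball c r) ∧ μ (ball c r) < ⊤)
    (Q c_L : ℝ) (hQ : 0 < Q) (hcL0 : 0 < c_L)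
    (hlmb : ∀ (x : X) (r : ℝ), 0 < r →
      ENNReal.ofReal r < 2 * EMetric.diam (Set.univ : Set X) →
      ENNReal.ofReal (c_L * r ^ Q) ≤ μ (ball x r))
    (p α : ℝ) (hp : 1 ≤ p) (hα0 : 0 < α) (hαQ : α ≤ Q / p) :
    ∃ C : ℝ, 0 < C ∧ ∀ (f : X → ℝ), MemLp f (ENNReal.ofReal p) μ →
      eLpNorm f (ENNReal.ofReal p) μ ≠ 0 →
      ∀ x : X, BddAbove (fracMaxSet μ 0 f x) →
        fracMax μ α f x ≤
          C * (eLpNorm f (ENNReal.ofReal p) μ).toReal ^ (α * p / Q) *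
            (fracMax μ 0 f x) ^ (1 - α * p / Q) := by
  have hp0 : 0 < p := one_pos.trans_le hp
  have hθ0 : 0 ≤ α * p / Q := by positivity
  have hθ1 : α * p / Q ≤ 1 := (div_le_one hQ).2 ((le_div_iff₀ hp0).1 hαQ)
  refine ⟨c_L ^ (-(α / Q)), Real.rpow_pos_of_pos hcL0 _, fun f hf _ x hbdd => ?_⟩
  have hM := fracMax_nonneg (μ := μ) (f := f) (x := x) 0
  apply Real.sSup_le _ (by positivity)
  rintro v ⟨c, r, hr, hdiam, hx, rfl⟩
  have hinterp := Real.rpow_mul_le_rpow_mul_rpow_of_le hr.le setAverage_abs_nonneg hθ0 hθ1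
    (rpow_mul_setAverage_abs_le_of_ofReal_le_measure hcL0 hr hp hf (hball c r hr).2.ne
      (hlmb c r hr hdiam))
    (setAverage_abs_le_fracMax_zero hbdd hr hdiam hx)
  calc r ^ α * ⨍ y in ball c r, |f y| ∂μ
      = r ^ (α * p / Q * (Q / p)) * ⨍ y in ball c r, |f y| ∂μ := by field_simp
    _ ≤ _ := hinterp
    _ = _ := by
        rw [Real.mul_rpow (by positivity) ENNReal.toReal_nonneg, ← Real.rpow_mul hcL0.le]
        field_simp

theorem stmt_4 {X : Type*} [MetricSpace X] [MeasurableSpace X]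
    (μ : Measure X) (hball : ∀ (c : X) (r : ℝ), 0 < r → 0 < μ (ball c r) ∧ μ (ball c r) < ⊤)
    (Q c_L : ℝ) (hQ : 0 < Q) (hcL0 : 0 < c_L) (hcL1 : c_L ≤ 1)
    (hlmb : ∀ (x : X) (r : ℝ), 0 < r →
      ENNReal.ofReal r < 2 * EMetric.diam (Set.univ : Set X) →
      ENNReal.ofReal (c_L * r ^ Q) ≤ μ (ball x r))
    (p α : ℝ) (hp : 1 ≤ p) (hα0 : 0 < α) (hαQ : α ≤ Q / p) (hp1 : p = 1 → α < Q) :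
    ∃ C : ℝ, 0 < C ∧ ∀ (f : X → ℝ), MemLp f (ENNReal.ofReal p) μ →
      eLpNorm f (ENNReal.ofReal p) μ ≠ 0 →
      ∀ x : X, BddAbove (fracMaxSet μ 0 f x) →
        fracMax μ α f x ≤
          C * (eLpNorm f (ENNReal.ofReal p) μ).toReal ^ (α * p / Q) *
            (fracMax μ 0 f x) ^ (1 - α * p / Q) :=
  stmt_4_general μ hball Q c_L hQ hcL0 hlmb p α hp hα0 hαQ
end

section
/- Let 0 < α < 1 and n ∈ ℕ with n > 1/α. Then the function ψ(δ) = (n δ - (δ - 1)^2 / 2) / (2^α δ^{1 - α}) is increasing on [1, 2), and sup_{1 ≤ δ < 2} ψ(δ) = n - 1/4. -/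
open Set Real Filter Topology

theorem stmt_8 (α : ℝ) (hα0 : 0 < α) (hα1 : α < 1) (n : ℕ) (hn : 1 / α < (n : ℝ)) :
    MonotoneOn (fun δ : ℝ => ((n : ℝ) * δ - (δ - 1) ^ 2 / 2) / (2 ^ α * δ ^ (1 - α))) (Ico 1 2) ∧
      sSup ((fun δ : ℝ => ((n : ℝ) * δ - (δ - 1) ^ 2 / 2) / (2 ^ α * δ ^ (1 - α))) '' Ico 1 2) =
        (n : ℝ) - 1 / 4 := by
  set f : ℝ → ℝ := fun δ => ((n : ℝ) * δ - (δ - 1) ^ 2 / 2) / (2 ^ α * δ ^ (1 - α)) with hf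
  have hc : (0:ℝ) < 2 ^ α := Real.rpow_pos_of_pos two_pos α
  have hαn : 1 < α * (n : ℝ) := by
    rw [div_lt_iff₀ hα0] at hn; nlinarith
  have hcont : ContinuousOn f (Icc 1 2) := by
    apply ContinuousOn.div
    · fun_prop
    · exact continuousOn_const.mul (continuousOn_id.rpow_const fun x hx =>
        Or.inl (ne_of_gt (lt_of_lt_of_le one_pos hx.1)))
    · intro x hx
      have hx0 : (0:ℝ) < x := lt_of_lt_of_le one_pos hx.1
      positivity
  have hderiv : ∀ δ ∈ Ioo (1:ℝ) 2, HasDerivAt f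
      ((((n : ℝ) - (δ - 1)) * (2 ^ α * δ ^ (1 - α)) -
        ((n : ℝ) * δ - (δ - 1) ^ 2 / 2) * (2 ^ α * ((1 - α) * δ ^ (1 - α - 1)))) /
        (2 ^ α * δ ^ (1 - α)) ^ 2) δ := by
    intro δ hδ
    have hδ0 : (0:ℝ) < δ := lt_trans one_pos hδ.1
    have hu : HasDerivAt (fun δ : ℝ => (n : ℝ) * δ - (δ - 1) ^ 2 / 2)
        ((n : ℝ) - (δ - 1)) δ := by
      have h1 : HasDerivAt (fun δ : ℝ => (n : ℝ) * δ) ((n : ℝ) * 1) δ :=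
        (hasDerivAt_id δ).const_mul _
      have h2 : HasDerivAt (fun δ : ℝ => (δ - 1) ^ 2 / 2)
          ((↑2 * (δ - 1) ^ (2 - 1) * 1) / 2) δ :=
        (((hasDerivAt_id δ).sub_const 1).pow 2).div_const 2
      have : HasDerivAt (fun δ : ℝ => (n : ℝ) * δ - (δ - 1) ^ 2 / 2) _ δ := h1.sub h2
      convert this using 1
      push_cast
      ring
    have hv : HasDerivAt (fun δ : ℝ => (2:ℝ) ^ α * δ ^ (1 - α))
        (2 ^ α * ((1 - α) * δ ^ (1 - α - 1))) δ :=
      (Real.hasDerivAt_rpow_const (Or.inl hδ0.ne')).const_mul _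
    have hne : (2:ℝ) ^ α * δ ^ (1 - α) ≠ 0 := by positivity
    exact hu.div hv hne
  have hDpos : ∀ δ ∈ Ioo (1:ℝ) 2,
      0 < (((n : ℝ) - (δ - 1)) * (2 ^ α * δ ^ (1 - α)) -
        ((n : ℝ) * δ - (δ - 1) ^ 2 / 2) * (2 ^ α * ((1 - α) * δ ^ (1 - α - 1)))) /
        (2 ^ α * δ ^ (1 - α)) ^ 2 := by
    intro δ hδ
    have hδ0 : (0:ℝ) < δ := lt_trans one_pos hδ.1
    have hsplit : δ ^ (1 - α) = δ ^ (1 - α - 1) * δ := by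
      nth_rewrite 1 [show (1 - α) = (1 - α - 1) + 1 by ring]
      rw [Real.rpow_add_one hδ0.ne']
    have hp : (0:ℝ) < δ ^ (1 - α - 1) := Real.rpow_pos_of_pos hδ0 _
    have hB : 0 < ((n : ℝ) - (δ - 1)) * δ - ((n : ℝ) * δ - (δ - 1) ^ 2 / 2) * (1 - α) := by
      nlinarith [mul_lt_mul_of_pos_right hαn hδ0, sq_nonneg (δ - 1),
        mul_nonneg (sub_nonneg.2 hα1.le) (sq_nonneg (δ - 1)), hδ.1, hδ.2]
    have hN : 0 < ((n : ℝ) - (δ - 1)) * (2 ^ α * δ ^ (1 - α)) -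
        ((n : ℝ) * δ - (δ - 1) ^ 2 / 2) * (2 ^ α * ((1 - α) * δ ^ (1 - α - 1))) := by
      have : ((n : ℝ) - (δ - 1)) * (2 ^ α * δ ^ (1 - α)) -
          ((n : ℝ) * δ - (δ - 1) ^ 2 / 2) * (2 ^ α * ((1 - α) * δ ^ (1 - α - 1))) =
          2 ^ α * δ ^ (1 - α - 1) *
            (((n : ℝ) - (δ - 1)) * δ - ((n : ℝ) * δ - (δ - 1) ^ 2 / 2) * (1 - α)) := by
        rw [hsplit]; ring
      rw [this]
      positivity
    have hden : (0:ℝ) < (2 ^ α * δ ^ (1 - α)) ^ 2 := by positivity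
    exact div_pos hN hden
  have hsmono : StrictMonoOn f (Icc 1 2) := by
    apply strictMonoOn_of_deriv_pos (convex_Icc 1 2) hcont
    intro x hx
    rw [interior_Icc] at hx
    rw [(hderiv x hx).deriv]
    exact hDpos x hx
  have hmonoIcc : MonotoneOn f (Icc 1 2) := hsmono.monotoneOn
  have hf2 : f 2 = (n : ℝ) - 1 / 4 := by
    have h2pow : (2:ℝ) ^ α * (2:ℝ) ^ (1 - α) = 2 := by
      rw [← Real.rpow_add two_pos]
      norm_num
    simp only [hf]
    rw [h2pow]
    norm_num
    ring
  constructor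
  · exact hmonoIcc.mono Ico_subset_Icc_self
  · apply csSup_eq_of_forall_le_of_forall_lt_exists_gt
    · exact ⟨f 1, mem_image_of_mem f (by constructor <;> norm_num)⟩
    · rintro a ⟨δ, hδ, rfl⟩
      have : f δ ≤ f 2 := hmonoIcc ⟨hδ.1, hδ.2.le⟩ (by constructor <;> norm_num) hδ.2.le
      rwa [hf2] at this
    · intro w hw
      have hcl : (2:ℝ) ∈ closure (Ico (1:ℝ) 2) := by
        rw [closure_Ico (by norm_num : (1:ℝ) ≠ 2)]
        constructor <;> norm_num
      have hne : (𝓝[Ico (1:ℝ) 2] 2).NeBot := mem_closure_iff_nhdsWithin_neBot.mp hcl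
      have htend : Tendsto f (𝓝[Ico (1:ℝ) 2] 2) (𝓝 ((n : ℝ) - 1 / 4)) := by
        have h1 : ContinuousWithinAt f (Icc 1 2) 2 :=
          hcont 2 (by constructor <;> norm_num)
        have h2 : Tendsto f (𝓝[Ico (1:ℝ) 2] 2) (𝓝 (f 2)) :=
          h1.mono_left (nhdsWithin_mono 2 Ico_subset_Icc_self)
        rwa [hf2] at h2
      have hev : ∀ᶠ δ in 𝓝[Ico (1:ℝ) 2] 2, w < f δ :=
        htend.eventually (eventually_gt_nhds hw)
      obtain ⟨δ, hδmem, hδw⟩ := (hev.and self_mem_nhdsWithin).exists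
      exact ⟨f δ, mem_image_of_mem f hδw, hδmem⟩
end
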